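/- Let c₁ > c₂ > 0 and 0 < δ < 1/2. There is a constant C such that for all t ≥ 0 and r ≥ c₁t/2 ≥ 1: ∫_t^∞ ⟨(c₁+1)τ + r − c₁t⟩^{−1} ⟨(c₁−c₂)τ + r − c₁t⟩^{−3/2} dτ ≤ C ⟨t+r⟩^{−1}. -/

import Mathlib

/-! For `τ ≥ t` the first bracket has argument `(c₁+1)(τ-t) + t + r ≥ t + r`, so it is at most
`⟨t+r⟩^{-1}` and can be pulled out of the integral. What remains is bounded by the integral of
`⟨(c₁-c₂)τ + b⟩^{-3/2}` over the whole line, which after the affine change of variables is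
`(c₁-c₂)^{-1} ∫ ⟨x⟩^{-3/2} dx`, finite and independent of `t` and `r`. -/

noncomputable section

/-- Japanese bracket `⟨s⟩ = (1+s²)^{1/2}`. -/
def jpn (s : ℝ) : ℝ := Real.sqrt (1 + s ^ 2)

open MeasureTheory Set

lemma jpn_pos (s : ℝ) : 0 < jpn s := Real.sqrt_pos.mpr (by positivity)

lemma jpn_rpow_nonneg (s p : ℝ) : 0 ≤ jpn s ^ p := Real.rpow_nonneg (jpn_pos s).le p

lemma jpn_le_jpn {a b : ℝ} (ha : 0 ≤ a) (hab : a ≤ b) : jpn a ≤ jpn b :=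
  Real.sqrt_le_sqrt (by nlinarith)

lemma jpn_rpow_le_jpn_rpow_of_nonpos {a b p : ℝ} (ha : 0 ≤ a) (hab : a ≤ b) (hp : p ≤ 0) :
    jpn b ^ p ≤ jpn a ^ p :=
  Real.rpow_le_rpow_of_nonpos (jpn_pos a) (jpn_le_jpn ha hab) hp

lemma continuous_jpn : Continuous jpn := by
  unfold jpn
  fun_prop

lemma integrable_jpn_rpow_neg {p : ℝ} (hp : 1 < p) : Integrable fun x => jpn x ^ (-p) := by
  have h := integrable_rpow_neg_one_add_norm_sq (E := ℝ) (μ := volume) (r := p)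
    (by rwa [Module.finrank_self, Nat.cast_one])
  refine h.congr (ae_of_all _ fun x => ?_)
  dsimp only
  rw [jpn, Real.sqrt_eq_rpow, ← Real.rpow_mul (by positivity), Real.norm_eq_abs, sq_abs]
  ring_nf

lemma integral_comp_mul_add {E : Type*} [NormedAddCommGroup E] [NormedSpace ℝ E]
    (g : ℝ → E) (a b : ℝ) : ∫ x, g (a * x + b) = |a⁻¹| • ∫ y, g y := by
  rw [Measure.integral_comp_mul_left (fun y => g (y + b)), integral_add_right_eq_self]

lemma setIntegral_mul_le_mul_integral {α : Type*} [MeasurableSpace α] {μ : Measure α}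
    {s : Set α} (hs : MeasurableSet s) {f g : α → ℝ} {M : ℝ}
    (hf : AEStronglyMeasurable f (μ.restrict s)) (hfM : ∀ x ∈ s, ‖f x‖ ≤ M) (hM : 0 ≤ M)
    (hg : Integrable g μ) (hg0 : 0 ≤ g) :
    ∫ x in s, f x * g x ∂μ ≤ M * ∫ x, g x ∂μ := by
  have hfM' : ∀ᵐ x ∂μ.restrict s, ‖f x‖ ≤ M := (ae_restrict_iff' hs).mpr (ae_of_all _ hfM)
  have hfg : IntegrableOn (fun x => f x * g x) s μ := hg.integrableOn.bdd_mul hf hfM'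
  calc ∫ x in s, f x * g x ∂μ ≤ ∫ x in s, M * g x ∂μ :=
        setIntegral_mono_on hfg (hg.integrableOn.const_mul M) hs fun x hx =>
          mul_le_mul_of_nonneg_right ((le_abs_self _).trans (hfM x hx)) (hg0 x)
    _ = M * ∫ x in s, g x ∂μ := integral_const_mul M _
    _ ≤ M * ∫ x, g x ∂μ := mul_le_mul_of_nonneg_left
        (setIntegral_le_integral hg (ae_of_all _ hg0)) hM

theorem forcing_integral_estimate_general
    (c1 c2 : ℝ) (hc12 : c2 < c1) :
    ∃ C : ℝ, 0 < C ∧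
      ∀ t r : ℝ, 0 ≤ t → c1 * t / 2 ≤ r → 1 ≤ c1 * t / 2 →
        (∫ τ in Set.Ici t,
            jpn ((c1 + 1) * τ + r - c1 * t) ^ (-(1 : ℝ))
              * jpn ((c1 - c2) * τ + r - c1 * t) ^ (-(3 : ℝ) / 2))
          ≤ C * jpn (t + r) ^ (-(1 : ℝ)) := by
  have hc : 0 < c1 - c2 := sub_pos.mpr hc12
  have hint : Integrable fun x => jpn x ^ (-(3 : ℝ) / 2) := by
    simpa only [neg_div] using integrable_jpn_rpow_neg (p := 3 / 2) (by norm_num)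
  set K := ∫ x, jpn x ^ (-(3 : ℝ) / 2)
  have hK : 0 ≤ K := integral_nonneg fun x => jpn_rpow_nonneg x _
  refine ⟨(c1 - c2)⁻¹ * K + 1, by positivity, fun t r ht hr h1 => ?_⟩
  have htr : 0 ≤ t + r := by linarith
  have hc1 : 0 ≤ c1 + 1 := by nlinarith
  have hjtr : 0 ≤ jpn (t + r) ^ (-(1 : ℝ)) := jpn_rpow_nonneg _ _
  have hcont : Continuous fun τ => jpn ((c1 + 1) * τ + (r - c1 * t)) ^ (-(1 : ℝ)) :=
    (continuous_jpn.comp (by fun_prop)).rpow_const fun _ => Or.inl (jpn_pos _).ne'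
  simp_rw [add_sub_assoc]
  calc _ ≤ jpn (t + r) ^ (-(1 : ℝ)) * ∫ τ, jpn ((c1 - c2) * τ + (r - c1 * t)) ^ (-(3 : ℝ) / 2) :=
        setIntegral_mul_le_mul_integral measurableSet_Ici
          hcont.aestronglyMeasurable (fun τ (hτ : t ≤ τ) => by
            rw [Real.norm_of_nonneg (jpn_rpow_nonneg _ _)]
            exact jpn_rpow_le_jpn_rpow_of_nonpos htr (by nlinarith) (by norm_num))
          hjtr ((hint.comp_add_right _).comp_mul_left' hc.ne')
          fun τ => jpn_rpow_nonneg _ _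
    _ = jpn (t + r) ^ (-(1 : ℝ)) * ((c1 - c2)⁻¹ * K) := by
        rw [integral_comp_mul_add (fun x => jpn x ^ (-(3 : ℝ) / 2)),
          abs_of_pos (inv_pos.mpr hc), smul_eq_mul]
    _ ≤ ((c1 - c2)⁻¹ * K + 1) * jpn (t + r) ^ (-(1 : ℝ)) := by nlinarith

/-- Integral estimate controlling the slower-speed forcing along outgoing
speed-`c₁` characteristics: for `r ≥ c₁t/2 ≥ 1`,
`∫_t^∞ ⟨(c₁+1)τ + r - c₁t⟩^{-1} ⟨(c₁-c₂)τ + r - c₁t⟩^{-3/2} dτ ≤ C⟨t+r⟩^{-1}`. -/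
theorem forcing_integral_estimate
    (c1 c2 δ : ℝ) (hc2 : 0 < c2) (hc12 : c2 < c1) (hδ0 : 0 < δ) (hδ : δ < 1 / 2) :
    ∃ C : ℝ, 0 < C ∧
      ∀ t r : ℝ, 0 ≤ t → c1 * t / 2 ≤ r → 1 ≤ c1 * t / 2 →
        (∫ τ in Set.Ici t,
            jpn ((c1 + 1) * τ + r - c1 * t) ^ (-(1 : ℝ))
              * jpn ((c1 - c2) * τ + r - c1 * t) ^ (-(3 : ℝ) / 2))
          ≤ C * jpn (t + r) ^ (-(1 : ℝ)) :=
  forcing_integral_estimate_general c1 c2 hc12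

end
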